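/- Let 𝔉 be a finite triangle-free family of frames in general position and let L be a layer of 𝔉. Then L is a clean family of frames. -/

import Mathlib

open Set

/-- An axis-aligned rectangle `[l, r] × [b, t]` with `l < r` and `b < t`. -/
structure Rect where
  l : ℝ
  r : ℝ
  b : ℝ
  t : ℝ
  hlr : l < r
  hbt : b < t

noncomputable instance : DecidableEq Rect := Classical.decEq _

/-- The filling rectangle, as a subset of the plane. -/
def Rect.toSet (R : Rect) : Set (ℝ × ℝ) := Set.Icc R.l R.r ×ˢ Set.Icc R.b R.t

/-- The frame: the boundary (topological frontier) of the filling rectangle. -/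
def Rect.frame (R : Rect) : Set (ℝ × ℝ) := frontier R.toSet

/-- A family of frames is in general position. -/
def GenPos (𝔉 : Finset Rect) : Prop :=
  ∀ F ∈ 𝔉, ∀ F' ∈ 𝔉, F ≠ F' →
    [F.l, F.r, F'.l, F'.r].Pairwise (· ≠ ·) ∧
    [F.b, F.t, F'.b, F'.t].Pairwise (· ≠ ·)

/-- The intersection graph of a family of frames. -/
def frameGraph (𝔉 : Finset Rect) : SimpleGraph {F : Rect // F ∈ 𝔉} where
  Adj F F' := F ≠ F' ∧ (F.1.frame ∩ F'.1.frame).Nonempty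
  symm := by
    constructor; intro a b h
    exact ⟨h.1.symm, by rw [Set.inter_comm]; exact h.2⟩
  loopless := by constructor; intro a h; exact h.1 rfl

/-- The intersection of frames `F` and `F'` is rightward-directed. -/
def RightDir (F F' : Rect) : Prop :=
  F.l < F'.l ∧ F'.l < F.r ∧ F.r < F'.r ∧ F.b < F'.b ∧ F'.b < F'.t ∧ F'.t < F.t

/-- The intersection of frames `F` and `F'` is leftward-directed. -/
def LeftDir (F F' : Rect) : Prop :=
  F'.l < F.l ∧ F.l < F'.r ∧ F'.r < F.r ∧ F.b < F'.b ∧ F'.b < F'.t ∧ F'.t < F.t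

/-- The intersection of frames `F` and `F'` is upward-directed. -/
def UpDir (F F' : Rect) : Prop :=
  F.b < F'.b ∧ F'.b < F.t ∧ F.t < F'.t ∧ F.l < F'.l ∧ F'.l < F'.r ∧ F'.r < F.r

/-- The intersection of frames `F` and `F'` is downward-directed. -/
def DownDir (F F' : Rect) : Prop :=
  F'.b < F.b ∧ F.b < F'.t ∧ F'.t < F.t ∧ F.l < F'.l ∧ F'.l < F'.r ∧ F'.r < F.r

/-- Any two intersecting frames of the family satisfy `P` (in one of the two orders). -/
def IntersectingPairsSatisfy (𝔉 : Finset Rect) (P : Rect → Rect → Prop) : Prop :=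
  ∀ F ∈ 𝔉, ∀ F' ∈ 𝔉, F ≠ F' → (F.frame ∩ F'.frame).Nonempty → P F F' ∨ P F' F

def IsRightwardDirected (𝔉 : Finset Rect) : Prop := IntersectingPairsSatisfy 𝔉 RightDir

/-- A directed family of frames. -/
def IsDirectedFamily (𝔉 : Finset Rect) : Prop :=
  IntersectingPairsSatisfy 𝔉 RightDir ∨ IntersectingPairsSatisfy 𝔉 LeftDir ∨
    IntersectingPairsSatisfy 𝔉 UpDir ∨ IntersectingPairsSatisfy 𝔉 DownDir

/-- `F` is enclosed by `F'`. -/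
def Enclosed (F F' : Rect) : Prop :=
  F'.l < F.l ∧ F.r < F'.r ∧ F'.b < F.b ∧ F.t < F'.t

/-- A clean family of frames. -/
def Clean (𝔉 : Finset Rect) : Prop :=
  ¬ ∃ F₁ ∈ 𝔉, ∃ F₂ ∈ 𝔉, ∃ F₃ ∈ 𝔉, F₁ ≠ F₂ ∧
    (Rect.frame F₁ ∩ Rect.frame F₂).Nonempty ∧ Enclosed F₃ F₁ ∧ Enclosed F₃ F₂

/-- The overlap graph of a family of rectangles: two rectangles are adjacent if they
intersect but neither is a subset of the other. -/
def overlapGraph (𝔉 : Finset Rect) : SimpleGraph {R : Rect // R ∈ 𝔉} where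
  Adj R S := (R.1.toSet ∩ S.1.toSet).Nonempty ∧ ¬ R.1.toSet ⊆ S.1.toSet ∧ ¬ S.1.toSet ⊆ R.1.toSet
  symm := by
    constructor; intro a b h
    exact ⟨by rw [Set.inter_comm]; exact h.1, h.2.2, h.2.1⟩
  loopless := by constructor; intro a h; exact h.2.1 subset_rfl

/-- `L` is a layer of the family `𝔉` of frames. -/
def IsLayer (𝔉 L : Finset Rect) : Prop :=
  L ⊆ 𝔉 ∧ (L.card = 1 ∨ ∀ F ∈ L, ∃ F' ∈ 𝔉, F' ∉ L ∧
    ¬ (F'.frame ⊆ ⋃ F'' ∈ L, Rect.toSet F'') ∧ (F.frame ∩ F'.frame).Nonempty)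

/-- `L` is an `m`-fold layer of `𝔉`. -/
def IsMFoldLayer : ℕ → Finset Rect → Finset Rect → Prop
  | 0, 𝔉, L => L = 𝔉
  | m + 1, 𝔉, L => ∃ L', IsMFoldLayer m 𝔉 L' ∧ IsLayer L' L

/-- Two families of frames are mutually independent: no frame of one intersects a
frame of the other. -/
def MutuallyIndependent (L L' : Finset Rect) : Prop :=
  ∀ F ∈ L, ∀ F' ∈ L', Rect.frame F ∩ Rect.frame F' = ∅


/-! A frame `F₃` enclosed by two intersecting frames `F₁, F₂` of a layer touches some frame
`F'` outside the layer that leaves `rect F₁ ∪ rect F₂`. Frames are connected, so `F'`, which has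
a point on `F₃` (inside both rectangles) and a point outside both, must cross `F₁` and `F₂`;
then `F₁, F₂, F'` form a triangle. -/

namespace Rect

lemma isClosed_toSet (R : Rect) : IsClosed R.toSet :=
  isClosed_Icc.prod isClosed_Icc

lemma frame_subset_toSet (R : Rect) : R.frame ⊆ R.toSet :=
  R.isClosed_toSet.frontier_subset

lemma frame_eq (R : Rect) :
    R.frame = (Icc R.l R.r ×ˢ {R.b, R.t}) ∪ ({R.l, R.r} ×ˢ Icc R.b R.t) := by
  rw [frame, toSet, frontier_prod_eq, closure_Icc, closure_Icc,
    frontier_Icc R.hlr.le, frontier_Icc R.hbt.le]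

lemma isConnected_frame (R : Rect) : IsConnected R.frame := by
  have hx := isConnected_Icc R.hlr.le
  have hy := isConnected_Icc R.hbt.le
  have hleftTop : IsConnected (({R.l} ×ˢ Icc R.b R.t) ∪ (Icc R.l R.r ×ˢ {R.t})) :=
    IsConnected.union ⟨(R.l, R.t), by simp [R.hlr.le, R.hbt.le]⟩
      (isConnected_singleton.prod hy) (hx.prod isConnected_singleton)
  have hrightBottom : IsConnected (({R.r} ×ˢ Icc R.b R.t) ∪ (Icc R.l R.r ×ˢ {R.b})) :=
    IsConnected.union ⟨(R.r, R.b), by simp [R.hlr.le, R.hbt.le]⟩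
      (isConnected_singleton.prod hy) (hx.prod isConnected_singleton)
  convert IsConnected.union ⟨(R.l, R.b), by simp [R.hlr.le, R.hbt.le]⟩ hleftTop hrightBottom using 1
  rw [frame_eq]
  ext z
  simp only [mem_union, mem_prod, mem_insert_iff, mem_singleton_iff]
  tauto

end Rect

lemma IsPreconnected.inter_frontier_nonempty {X : Type*} [TopologicalSpace X] {s t : Set X}
    (hs : IsPreconnected s) (hst : (s ∩ t).Nonempty) (hs_t : (s \ t).Nonempty) :
    (s ∩ frontier t).Nonempty := by
  by_contra hdisj
  have hcover : s ⊆ interior t ∪ (closure t)ᶜ := by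
    intro z hz
    by_cases hzt : z ∈ closure t
    · exact Or.inl (by_contra fun hz_int => hdisj ⟨z, hz, hzt, hz_int⟩)
    · exact Or.inr hzt
  obtain ⟨x, hxs, hxt⟩ := hst
  obtain ⟨y, hys, hyt⟩ := hs_t
  obtain ⟨z, -, hz_int, hz_out⟩ := hs _ _ isOpen_interior isClosed_closure.isOpen_compl hcover
    ⟨x, hxs, (hcover hxs).resolve_right (not_not.2 (subset_closure hxt))⟩
    ⟨y, hys, (hcover hys).resolve_left fun hy_int => hyt (interior_subset hy_int)⟩
  exact hz_out (subset_closure (interior_subset hz_int))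

lemma Enclosed.toSet_subset {F F' : Rect} (h : Enclosed F F') : F.toSet ⊆ F'.toSet :=
  prod_mono (Icc_subset_Icc h.1.le h.2.1.le) (Icc_subset_Icc h.2.2.1.le h.2.2.2.le)

lemma frame_inter_nonempty_of_enclosed {F F₃ F' : Rect} (h : Enclosed F₃ F)
    (h₃ : (F₃.frame ∩ F'.frame).Nonempty) (hout : ¬ F'.frame ⊆ F.toSet) :
    (F.frame ∩ F'.frame).Nonempty := by
  obtain ⟨x, hx₃, hx⟩ := h₃
  rw [inter_comm]
  exact F'.isConnected_frame.isPreconnected.inter_frontier_nonempty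
    ⟨x, hx, h.toSet_subset (F₃.frame_subset_toSet hx₃)⟩ (sdiff_nonempty.2 hout)

lemma frameGraph_adj_iff {𝔉 : Finset Rect} {F F' : {F : Rect // F ∈ 𝔉}} :
    (frameGraph 𝔉).Adj F F' ↔ F.1 ≠ F'.1 ∧ (F.1.frame ∩ F'.1.frame).Nonempty := by
  simp only [frameGraph, ne_eq, Subtype.ext_iff]

lemma IsLayer.exists_external_inter_nonempty {𝔉 L : Finset Rect} (hL : IsLayer 𝔉 L)
    (hcard : 1 < L.card) {F : Rect} (hF : F ∈ L) :
    ∃ F' ∈ 𝔉, F' ∉ L ∧ ¬ F'.frame ⊆ ⋃ F'' ∈ L, F''.toSet ∧ (F.frame ∩ F'.frame).Nonempty :=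
  hL.2.resolve_left hcard.ne' F hF

theorem stmt19_general (𝔉 : Finset Rect)
    (htf : (frameGraph 𝔉).CliqueFree 3)
    (L : Finset Rect) (hL : IsLayer 𝔉 L) : Clean L := by
  rintro ⟨F₁, hF₁, F₂, hF₂, F₃, hF₃, hne, h₁₂, h₃₁, h₃₂⟩
  obtain ⟨F', hF'𝔉, hF'L, hext, h₃'⟩ :=
    hL.exists_external_inter_nonempty (Finset.one_lt_card.2 ⟨F₁, hF₁, F₂, hF₂, hne⟩) hF₃
  have hout (F) (hF : F ∈ L) : ¬ F'.frame ⊆ F.toSet :=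
    fun hsub => hext (hsub.trans (subset_biUnion_of_mem (u := fun F'' => F''.toSet) hF))
  have hne' (F) (hF : F ∈ L) : F ≠ F' := fun h => hF'L (h ▸ hF)
  refine htf {⟨F₁, hL.1 hF₁⟩, ⟨F₂, hL.1 hF₂⟩, ⟨F', hF'𝔉⟩}
    (SimpleGraph.is3Clique_triple_iff.2 ⟨?_, ?_, ?_⟩) <;> rw [frameGraph_adj_iff]
  · exact ⟨hne, h₁₂⟩
  · exact ⟨hne' F₁ hF₁, frame_inter_nonempty_of_enclosed h₃₁ h₃' (hout F₁ hF₁)⟩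
  · exact ⟨hne' F₂ hF₂, frame_inter_nonempty_of_enclosed h₃₂ h₃' (hout F₂ hF₂)⟩

/-- Every layer of a triangle-free family of frames in general position is clean. -/
theorem stmt19 (𝔉 : Finset Rect) (hgp : GenPos 𝔉)
    (htf : (frameGraph 𝔉).CliqueFree 3)
    (L : Finset Rect) (hL : IsLayer 𝔉 L) : Clean L :=
  stmt19_general 𝔉 htf L hL
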